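/- arXiv:2009.13751 — 7 statements merged into one kernel-verified Lean document; each statement's English description precedes it below -/
import Mathlib

section
/- Let K be a star K_{1,r} in Q_n with 2 ≤ r ≤ n, and let u, v be two adjacent vertices of Q_n both outside K. Then u and v together have at most 2 neighbors among the vertices of K. -/
def Q (n : ℕ) : SimpleGraph (Fin n → ZMod 2) :=
  SimpleGraph.fromRel (fun u v => hammingDist u v = 1)

def FQ (n : ℕ) : SimpleGraph (Fin n → ZMod 2) :=
  SimpleGraph.fromRel (fun u v => hammingDist u v = 1 ∨ hammingDist u v = n)

private lemma Qadj_iff {n : ℕ} (a b : Fin n → ZMod 2) :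
    (Q n).Adj a b ↔ hammingDist a b = 1 := by
  simp only [Q, SimpleGraph.fromRel_adj]
  constructor
  · rintro ⟨hne, h | h⟩
    · exact h
    · rwa [hammingDist_comm]
  · intro h
    exact ⟨hammingDist_ne_zero.mp (by omega), Or.inl h⟩

private lemma parity_lemma {n : ℕ} (a b : Fin n → ZMod 2) :
    ((hammingDist a b : ℕ) : ZMod 2) = (∑ i, a i) + ∑ i, b i := by
  rw [hammingDist, Finset.card_filter, Nat.cast_sum, ← Finset.sum_add_distrib]
  refine Finset.sum_congr rfl fun i _ => ?_
  have h : ∀ p q : ZMod 2, ((if p ≠ q then (1:ℕ) else 0 : ℕ) : ZMod 2) = p + q := by decide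
  exact h _ _

private lemma hne_of_adj {n : ℕ} {a b : Fin n → ZMod 2} (h : hammingDist a b = 1) :
    (∑ i, a i) ≠ ∑ i, b i := by
  intro hEq
  have hp := parity_lemma a b
  rw [h, hEq] at hp
  have : ∀ p : ZMod 2, ((1:ℕ) : ZMod 2) ≠ p + p := by decide
  exact this _ hp

private lemma two_choices {n : ℕ} (x u : Fin n → ZMod 2) (hux : hammingDist u x = 2) :
    ∃ a b : Fin n → ZMod 2, ∀ y, hammingDist x y = 1 → hammingDist u y = 1 → y = a ∨ y = b := by
  rw [hammingDist] at hux
  obtain ⟨j, k, hjk, hset⟩ := Finset.card_eq_two.mp hux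
  have hDux : ∀ i, u i ≠ x i ↔ (i = j ∨ i = k) := by
    intro i
    rw [show (u i ≠ x i) ↔ i ∈ ({i | u i ≠ x i} : Finset (Fin n)) by simp, hset]
    simp
  refine ⟨Function.update x j (x j + 1), Function.update x k (x k + 1), fun y h1 h2 => ?_⟩
  rw [hammingDist] at h1
  obtain ⟨m, hm⟩ := Finset.card_eq_one.mp h1
  have hDxy : ∀ i, x i ≠ y i ↔ i = m := by
    intro i
    rw [show (x i ≠ y i) ↔ i ∈ ({i | x i ≠ y i} : Finset (Fin n)) by simp, hm]
    simp
  have hmjk : m = j ∨ m = k := by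
    by_contra hc
    push_neg at hc
    obtain ⟨hmj, hmk⟩ := hc
    have hsub : ({j, k, m} : Finset (Fin n)) ⊆ Finset.univ.filter (fun i => u i ≠ y i) := by
      intro i hi
      simp only [Finset.mem_insert, Finset.mem_singleton] at hi
      simp only [Finset.mem_filter, Finset.mem_univ, true_and]
      rcases hi with rfl | rfl | rfl
      · have hxy : x i = y i := not_ne_iff.mp (fun h => hmj ((hDxy i).mp h).symm)
        exact fun h => ((hDux i).mpr (Or.inl rfl)) (hxy ▸ h)
      · have hxy : x i = y i := not_ne_iff.mp (fun h => hmk ((hDxy i).mp h).symm)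
        exact fun h => ((hDux i).mpr (Or.inr rfl)) (hxy ▸ h)
      · have hux' : u i = x i := not_ne_iff.mp (fun h => by
          rcases (hDux i).mp h with rfl | rfl
          exacts [hmj rfl, hmk rfl])
        have hxy : x i ≠ y i := (hDxy i).mpr rfl
        exact hux' ▸ hxy
    have hcard : ({j, k, m} : Finset (Fin n)).card = 3 := by
      rw [Finset.card_insert_of_notMem (by simp [hjk, Ne.symm hmj]),
        Finset.card_insert_of_notMem (by simp [Ne.symm hmk]), Finset.card_singleton]
    have := Finset.card_le_card hsub
    rw [hammingDist] at h2
    omega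
  have hupd : ∀ i', m = i' → y = Function.update x i' (x i' + 1) := by
    rintro i' rfl
    funext i
    by_cases hi : i = m
    · subst hi
      rw [Function.update_self]
      have := (hDxy i).mpr rfl
      revert this
      generalize x i = p
      generalize y i = q
      revert p q
      decide
    · rw [Function.update_of_ne hi]
      exact (not_ne_iff.mp (fun h => hi ((hDxy i).mp h))).symm
  rcases hmjk with h | h
  · exact Or.inl (hupd j h)
  · exact Or.inr (hupd k h)

private lemma ncard_le_two_of_subset_pair {α : Type*} {s : Set α} (p q : α)
    (h : s ⊆ {p, q}) : s.ncard ≤ 2 := by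
  have h1 := Set.ncard_le_ncard h ((Set.finite_singleton q).insert p)
  have h2 : ({p, q} : Set α).ncard ≤ 2 := by
    refine le_trans (Set.ncard_insert_le p {q}) ?_
    simp [Set.ncard_singleton]
  omega

private lemma main_aux {n r : ℕ} (x : Fin n → ZMod 2) (xs : Fin r → (Fin n → ZMod 2))
    (hadj : ∀ i, hammingDist x (xs i) = 1)
    (u v : Fin n → ZMod 2) (huv : hammingDist u v = 1)
    (hu : u ∉ insert x (Set.range xs)) (hv : v ∉ insert x (Set.range xs))
    (hpar : (∑ i, u i) = ∑ i, x i) :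
    (((Q n).neighborSet u ∪ (Q n).neighborSet v) ∩ insert x (Set.range xs)).ncard ≤ 2 := by
  have hune : u ≠ x := fun h => hu (by simp [h])
  have z4 : ∀ p q s : ZMod 2, p ≠ s → q ≠ s → p = q := by decide
  have hPv_leaf : ∀ i, (∑ j, v j) = ∑ j, xs i j := by
    intro i
    refine z4 _ _ (∑ j, x j) ?_ (Ne.symm (hne_of_adj (hadj i)))
    rw [← hpar]
    exact Ne.symm (hne_of_adj huv)
  have hvleaf : ∀ i, ¬ hammingDist v (xs i) = 1 := fun i h => hne_of_adj h (hPv_leaf i)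
  have hux : ¬ hammingDist u x = 1 := fun h => hne_of_adj h hpar
  have hmemS : ∀ y, y ∈ (((Q n).neighborSet u ∪ (Q n).neighborSet v) ∩ insert x (Set.range xs)) ↔
      (hammingDist u y = 1 ∨ hammingDist v y = 1) ∧ (y = x ∨ ∃ i, xs i = y) := by
    intro y
    simp [Set.mem_inter_iff, SimpleGraph.mem_neighborSet, Qadj_iff, Set.mem_insert_iff]
  by_cases hd2 : hammingDist u x = 2
  · obtain ⟨a, b, hab⟩ := two_choices x u hd2
    by_cases hvx : hammingDist v x = 1
    · have hv' : v = a ∨ v = b := hab v (by rwa [hammingDist_comm]) huv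
      have key : ∀ c d : Fin n → ZMod 2, v = c →
          (∀ y, hammingDist x y = 1 → hammingDist u y = 1 → y = c ∨ y = d) →
          (((Q n).neighborSet u ∪ (Q n).neighborSet v) ∩ insert x (Set.range xs)).ncard ≤ 2 := by
        rintro c d rfl hcd
        refine ncard_le_two_of_subset_pair x d fun y hy => ?_
        obtain ⟨hadjy, hyK⟩ := (hmemS y).mp hy
        rcases hyK with rfl | ⟨i, rfl⟩
        · exact Or.inl rfl
        · rcases hadjy with h | h
          · rcases hcd (xs i) (hadj i) h with h' | h'
            · exact absurd (h' ▸ Set.mem_insert_iff.mpr (Or.inr ⟨i, rfl⟩)) hv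
            · exact Or.inr h'
          · exact absurd h (hvleaf i)
      rcases hv' with h' | h'
      · exact key a b h' hab
      · exact key b a h' (fun y h1 h2 => (hab y h1 h2).symm)
    · refine ncard_le_two_of_subset_pair a b fun y hy => ?_
      obtain ⟨hadjy, hyK⟩ := (hmemS y).mp hy
      rcases hyK with rfl | ⟨i, rfl⟩
      · rcases hadjy with h | h
        · exact absurd h hux
        · exact absurd h hvx
      · rcases hadjy with h | h
        · rcases hab (xs i) (hadj i) h with h' | h' <;> simp [h']
        · exact absurd h (hvleaf i)
  · refine ncard_le_two_of_subset_pair x x fun y hy => ?_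
    obtain ⟨hadjy, hyK⟩ := (hmemS y).mp hy
    rcases hyK with rfl | ⟨i, rfl⟩
    · exact Or.inl rfl
    · exfalso
      rcases hadjy with h | h
      · have ht : hammingDist u x ≤ 2 := by
          calc hammingDist u x ≤ hammingDist u (xs i) + hammingDist (xs i) x :=
                hammingDist_triangle _ _ _
            _ = 2 := by rw [h, hammingDist_comm, hadj i]
        have h0 : hammingDist u x ≠ 0 := hammingDist_ne_zero.mpr hune
        omega
      · exact absurd h (hvleaf i)

/-- Two adjacent vertices outside a star K_{1,r} in Q_n together have at most 2
neighbors among the vertices of the star. -/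
theorem hypercube_star_outside_edge (n r : ℕ) (hr : 2 ≤ r) (hrn : r ≤ n)
    (x : Fin n → ZMod 2) (xs : Fin r → (Fin n → ZMod 2))
    (hinj : Function.Injective xs) (hadj : ∀ i, (Q n).Adj x (xs i))
    (u v : Fin n → ZMod 2) (huv : (Q n).Adj u v)
    (hu : u ∉ insert x (Set.range xs)) (hv : v ∉ insert x (Set.range xs)) :
    (((Q n).neighborSet u ∪ (Q n).neighborSet v) ∩ insert x (Set.range xs)).ncard ≤ 2 := by
  have huv' : hammingDist u v = 1 := (Qadj_iff u v).mp huv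
  have hadj' : ∀ i, hammingDist x (xs i) = 1 := fun i => (Qadj_iff _ _).mp (hadj i)
  by_cases hp : (∑ i, u i) = ∑ i, x i
  · exact main_aux x xs hadj' u v huv' hu hv hp
  · have hvu : hammingDist v u = 1 := by rwa [hammingDist_comm]
    have z4 : ∀ p q s : ZMod 2, p ≠ s → q ≠ s → p = q := by decide
    have hp' : (∑ i, v i) = ∑ i, x i :=
      z4 _ _ (∑ i, u i) (Ne.symm (hne_of_adj huv')) (Ne.symm hp)
    rw [Set.union_comm]
    exact main_aux x xs hadj' v u hvu hv hu hp'
end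

section
/- Let K be a star K_{1,r} in Q_n with 2 ≤ r ≤ n, and let C be a connected subgraph of Q_n with k = |V(C)| ≥ 2 vertices, vertex-disjoint from K. Then the number of vertices of K having a neighbor in C is at most 2(k−1). -/
lemma zmod2_add_self (a : ZMod 2) : a + a = 0 := by revert a; decide

lemma vec_add_self {n : ℕ} (u : Fin n → ZMod 2) : u + u = 0 := by
  funext k; exact zmod2_add_self (u k)

lemma dist_one_iff {n : ℕ} {u v : Fin n → ZMod 2} :
    hammingDist u v = 1 ↔ ∃ j, v = u + Pi.single j 1 := by
  constructor
  · intro h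
    unfold hammingDist at h
    obtain ⟨j, hj⟩ := Finset.card_eq_one.mp h
    refine ⟨j, funext fun k => ?_⟩
    by_cases hk : k = j
    · subst hk
      have hk2 : k ∈ ({k} : Finset (Fin n)) := Finset.mem_singleton_self k
      rw [← hj, Finset.mem_filter] at hk2
      have : u k ≠ v k := hk2.2
      have h2 : ∀ a b : ZMod 2, a ≠ b → b = a + 1 := by decide
      simpa [Pi.single_eq_same] using h2 _ _ this
    · have hk2 : k ∉ ({j} : Finset (Fin n)) := by simp [hk]
      rw [← hj, Finset.mem_filter] at hk2
      push_neg at hk2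
      have := hk2 (Finset.mem_univ k)
      simp [Pi.single_apply, hk, this]
  · rintro ⟨j, rfl⟩
    unfold hammingDist
    apply Finset.card_eq_one.mpr
    refine ⟨j, ?_⟩
    · ext k
      simp only [Finset.mem_filter, Finset.mem_univ, true_and, Finset.mem_singleton,
        Pi.add_apply, Pi.single_apply]
      constructor
      · intro h; by_contra hk; simp [hk] at h
      · rintro rfl; simp

lemma adjQ {n : ℕ} {u v : Fin n → ZMod 2} :
    (Q n).Adj u v ↔ ∃ j, v = u + Pi.single j 1 := by
  rw [Q, SimpleGraph.fromRel_adj]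
  constructor
  · rintro ⟨hne, h | h⟩
    · exact dist_one_iff.mp h
    · exact dist_one_iff.mp (by rwa [hammingDist_comm] at h)
  · intro h
    have h1 : hammingDist u v = 1 := dist_one_iff.mpr h
    refine ⟨fun he => by simp [he, hammingDist_self] at h1, Or.inl h1⟩

lemma sum_single {n : ℕ} (j : Fin n) : ∑ k, (Pi.single j 1 : Fin n → ZMod 2) k = 1 := by
  simp [Pi.single_apply]

lemma pair_eq {n : ℕ} {q s q' s' : Fin n}
    (hq : q ≠ s) (hq' : q' ≠ s')
    (h : (Pi.single q 1 : Fin n → ZMod 2) + Pi.single s 1 = Pi.single q' 1 + Pi.single s' 1) :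
    (q = q' ∧ s = s') ∨ (q = s' ∧ s = q') := by
  have key : ∀ k : Fin n, ((if k = q then 1 else 0) + (if k = s then 1 else 0) : ZMod 2)
      = (if k = q' then 1 else 0) + (if k = s' then 1 else 0) := by
    intro k
    have := congrFun h k
    simpa [Pi.single_apply] using this
  by_cases h1 : q = q'
  · left; refine ⟨h1, ?_⟩
    by_contra hss
    have hsq' : s ≠ q' := h1 ▸ hq.symm
    have e2 := key s
    simp [hq.symm, hsq', hss] at e2
  · have e1 := key q
    have h2 : q = s' := by
      by_contra hc
      simp [hq, h1, hc] at e1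
    right; refine ⟨h2, ?_⟩
    by_contra hc
    have e2 := key s
    simp [hq.symm, hc, h2 ▸ hq.symm] at e2

lemma single_inj {n : ℕ} {j l : Fin n} (h : (Pi.single j 1 : Fin n → ZMod 2) = Pi.single l 1) :
    j = l := by
  by_contra hc
  have := congrFun h j
  simp [Pi.single_eq_same, Pi.single_apply, hc] at this

/-- A connected subgraph C of Q_n disjoint from a star K_{1,r} with k ≥ 2 vertices
has at most 2(k-1) neighbors among the vertices of the star. -/
theorem hypercube_star_connected_neighbors (n r : ℕ) (hr : 2 ≤ r) (hrn : r ≤ n)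
    (x : Fin n → ZMod 2) (xs : Fin r → (Fin n → ZMod 2))
    (hinj : Function.Injective xs) (hadj : ∀ i, (Q n).Adj x (xs i))
    (C : Finset (Fin n → ZMod 2)) (hk : 2 ≤ C.card)
    (hdisj : ∀ c ∈ C, c ∉ insert x (Set.range xs))
    (hconn : ((Q n).induce (C : Set (Fin n → ZMod 2))).Connected) :
    ((insert x (Set.range xs)) ∩ {y | ∃ c ∈ C, (Q n).Adj c y}).ncard ≤ 2 * (C.card - 1) := by
  classical
  have hxC : ∀ c ∈ C, c ≠ x := fun c hc h => hdisj c hc (by rw [h]; exact Set.mem_insert _ _)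
  have hlC : ∀ c ∈ C, ∀ i, c ≠ xs i := fun c hc i h =>
    hdisj c hc (by rw [h]; exact Set.mem_insert_iff.mpr (Or.inr ⟨i, rfl⟩))
  choose a ha using fun i => adjQ.mp (hadj i)
  have hainj : Function.Injective a := by
    intro i j hij
    apply hinj
    rw [ha i, ha j, hij]
  set Kf : Finset (Fin n → ZMod 2) := insert x (Finset.image xs Finset.univ) with hKf
  set f : (Fin n → ZMod 2) → Finset (Fin n → ZMod 2) :=
    fun c => Kf.filter (fun y => (Q n).Adj c y) with hf
  set Sf : Finset (Fin n → ZMod 2) := Kf.filter (fun y => ∃ c ∈ C, (Q n).Adj c y) with hSf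
  have hgoal : ((insert x (Set.range xs)) ∩ {y | ∃ c ∈ C, (Q n).Adj c y}).ncard = Sf.card := by
    rw [← Set.ncard_coe_finset]
    congr 1
    ext y
    simp only [hSf, Finset.coe_filter, hKf, Set.mem_setOf_eq, Finset.mem_insert,
      Finset.mem_image, Finset.mem_univ, true_and, Set.mem_inter_iff, Set.mem_insert_iff,
      Set.mem_range]
  rw [hgoal]
  -- parity
  set P : (Fin n → ZMod 2) → ZMod 2 := fun u => ∑ k, u k with hP
  have hPadd : ∀ u v, P (u + v) = P u + P v := fun u v => Finset.sum_add_distrib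
  have hPs : ∀ j, P (Pi.single j 1) = 1 := sum_single
  have hPadj : ∀ u v, (Q n).Adj u v → P v = P u + 1 := by
    intro u v h
    obtain ⟨j, rfl⟩ := adjQ.mp h
    rw [hPadd, hPs]
  have hPne : ∀ z : ZMod 2, z ≠ z + 1 := by decide
  -- structure lemmas
  have hA : ∀ c ∈ C, (Q n).Adj c x → ∃ m, (∀ i, m ≠ a i) ∧ c = x + Pi.single m 1 := by
    intro c hc h
    obtain ⟨m, hm⟩ := adjQ.mp (((Q n).adj_comm c x).mp h)
    refine ⟨m, fun i hma => ?_, hm⟩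
    exact hlC c hc i (by rw [hm, hma, ← ha i])
  have hB : ∀ c ∈ C, ∀ i, (Q n).Adj c (xs i) → ∃ m, m ≠ a i ∧ c = xs i + Pi.single m 1 := by
    intro c hc i h
    obtain ⟨m, hm⟩ := adjQ.mp (((Q n).adj_comm c (xs i)).mp h)
    refine ⟨m, fun hma => ?_, hm⟩
    apply hxC c hc
    rw [hm, ha i, hma, add_assoc, vec_add_self, add_zero]
  have hExcl : ∀ c ∈ C, (Q n).Adj c x → ∀ i, ¬ (Q n).Adj c (xs i) := by
    intro c hc h i hi
    have h1 : P x = P c + 1 := hPadj c x h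
    have h2 : P (xs i) = P c + 1 := hPadj c (xs i) hi
    have h3 : P (xs i) = P x + 1 := hPadj x (xs i) (hadj i)
    refine hPne (P x) ?_
    calc P x = P c + 1 := h1
      _ = P (xs i) := h2.symm
      _ = P x + 1 := h3
  have hPair : ∀ c ∈ C, ∀ i j, i ≠ j → (Q n).Adj c (xs i) → (Q n).Adj c (xs j) →
      c = xs i + Pi.single (a j) 1 := by
    intro c hc i j hij hi hj
    obtain ⟨mi, hmi_ne, hmi⟩ := hB c hc i hi
    obtain ⟨mj, hmj_ne, hmj⟩ := hB c hc j hj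
    have heq : (Pi.single (a i) 1 : Fin n → ZMod 2) + Pi.single mi 1
        = Pi.single (a j) 1 + Pi.single mj 1 := by
      have h0 : x + ((Pi.single (a i) 1 : Fin n → ZMod 2) + Pi.single mi 1)
          = x + (Pi.single (a j) 1 + Pi.single mj 1) := by
        rw [← add_assoc, ← add_assoc, ← ha i, ← ha j, ← hmi, ← hmj]
      exact add_left_cancel h0
    rcases pair_eq hmi_ne.symm hmj_ne.symm heq with ⟨h1, _⟩ | ⟨_, h2⟩
    · exact absurd (hainj h1) hij
    · rw [hmi, h2]
  have hfsub : ∀ c, ¬ (Q n).Adj c x →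
      f c ⊆ Finset.image xs (Finset.univ.filter fun i => (Q n).Adj c (xs i)) := by
    intro c hcx y hy
    simp only [hf, Finset.mem_filter, hKf, Finset.mem_insert, Finset.mem_image,
      Finset.mem_univ, true_and] at hy
    obtain ⟨hy1, hy2⟩ := hy
    rcases hy1 with rfl | ⟨i, rfl⟩
    · exact absurd hy2 hcx
    · simp only [Finset.mem_image, Finset.mem_filter, Finset.mem_univ, true_and]
      exact ⟨i, hy2, rfl⟩
  have hcardA : ∀ c ∈ C, (Q n).Adj c x → (f c).card ≤ 1 := by
    intro c hc hcx
    have hsub : f c ⊆ {x} := by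
      intro y hy
      simp only [hf, Finset.mem_filter, hKf, Finset.mem_insert, Finset.mem_image,
        Finset.mem_univ, true_and] at hy
      obtain ⟨hy1, hy2⟩ := hy
      rcases hy1 with rfl | ⟨i, rfl⟩
      · exact Finset.mem_singleton_self _
      · exact absurd hy2 (hExcl c hc hcx i)
    simpa using Finset.card_le_card hsub
  have hcard2 : ∀ c ∈ C, (f c).card ≤ 2 := by
    intro c hc
    by_cases hcx : (Q n).Adj c x
    · exact le_trans (hcardA c hc hcx) one_le_two
    · refine le_trans (Finset.card_le_card (hfsub c hcx)) (le_trans Finset.card_image_le ?_)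
      by_contra hgt
      push_neg at hgt
      obtain ⟨i, hi, j, hj, l, hl, hij, hil, hjl⟩ := Finset.two_lt_card.mp hgt
      simp only [Finset.mem_filter, Finset.mem_univ, true_and] at hi hj hl
      have e1 := hPair c hc i j hij hi hj
      have e2 := hPair c hc i l hil hi hl
      have heq : (Pi.single (a j) 1 : Fin n → ZMod 2) = Pi.single (a l) 1 :=
        add_left_cancel (e1.symm.trans e2)
      exact hjl (hainj (single_inj heq))
  have hnbr : ∀ c0 ∈ C, ∃ c1 ∈ C, (Q n).Adj c0 c1 := by
    intro c0 hc0
    obtain ⟨u, hu, v, hv, huv⟩ := Finset.one_lt_card.mp (lt_of_lt_of_le one_lt_two hk)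
    obtain ⟨c2, hc2, hne⟩ : ∃ c2 ∈ C, c2 ≠ c0 := by
      rcases eq_or_ne u c0 with rfl | h
      · exact ⟨v, hv, fun h => huv h.symm⟩
      · exact ⟨u, hu, h⟩
    obtain ⟨w⟩ := hconn ⟨c0, by simpa using hc0⟩ ⟨c2, by simpa using hc2⟩
    have hnn : ¬ w.Nil := SimpleGraph.Walk.not_nil_of_ne
      (by simp only [ne_eq, Subtype.mk.injEq]; exact hne.symm)
    obtain ⟨u', hadj', q, _⟩ := SimpleGraph.Walk.not_nil_iff.mp hnn
    exact ⟨u'.1, by simpa using u'.2, by simpa using hadj'⟩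
  have hSfsub : ∀ T : Finset (Fin n → ZMod 2),
      (∀ y ∈ Sf, ∃ c ∈ T, (Q n).Adj c y) → Sf.card ≤ ∑ c ∈ T, (f c).card := by
    intro T hT
    refine le_trans (Finset.card_le_card ?_) Finset.card_biUnion_le
    intro y hy
    obtain ⟨c, hcT, hcy⟩ := hT y hy
    refine Finset.mem_biUnion.mpr ⟨c, hcT, ?_⟩
    simp only [hf, Finset.mem_filter]
    exact ⟨(Finset.mem_filter.mp hy).1, hcy⟩
  by_cases hall : ∀ c ∈ C, ∃ y ∈ Kf, (Q n).Adj c y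
  case neg =>
    push_neg at hall
    obtain ⟨c0, hc0, hc0no⟩ := hall
    have h1 : Sf.card ≤ ∑ c ∈ C.erase c0, (f c).card := by
      apply hSfsub
      intro y hy
      simp only [hSf, Finset.mem_filter] at hy
      obtain ⟨hyK, c, hcC, hcy⟩ := hy
      refine ⟨c, Finset.mem_erase.mpr ⟨?_, hcC⟩, hcy⟩
      rintro rfl
      exact hc0no y hyK hcy
    calc Sf.card ≤ ∑ c ∈ C.erase c0, (f c).card := h1
      _ ≤ ∑ _c ∈ C.erase c0, 2 :=
        Finset.sum_le_sum (fun c hc => hcard2 c (Finset.mem_of_mem_erase hc))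
      _ = 2 * (C.erase c0).card := by rw [Finset.sum_const, smul_eq_mul, mul_comm]
      _ = 2 * (C.card - 1) := by rw [Finset.card_erase_of_mem hc0]
  case pos =>
    have h1 : Sf.card ≤ ∑ c ∈ C, (f c).card := by
      apply hSfsub
      intro y hy
      simp only [hSf, Finset.mem_filter] at hy
      exact hy.2
    by_cases hAex : ∃ c0 ∈ C, (Q n).Adj c0 x
    · obtain ⟨c0, hc0, hc0x⟩ := hAex
      obtain ⟨c1, hc1, hadj01⟩ := hnbr c0 hc0
      have hne01 : c1 ≠ c0 := ((Q n).ne_of_adj hadj01).symm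
      have hb0 : (f c0).card ≤ 1 := hcardA c0 hc0 hc0x
      -- c1 is adjacent to at most one vertex of the star
      have hb1 : (f c1).card ≤ 1 := by
        obtain ⟨m, hm_not, hm⟩ := hA c0 hc0 hc0x
        obtain ⟨p, hp⟩ := adjQ.mp hadj01
        have hc1eq : c1 = x + (Pi.single m 1 + Pi.single p 1) := by
          rw [hp, hm, add_assoc]
        have hmp : m ≠ p := by
          rintro rfl
          exact hxC c1 hc1 (by rw [hc1eq, vec_add_self, add_zero])
        have hnotx : ¬ (Q n).Adj c1 x := by
          intro hx1
          have k1 : P x = P c0 + 1 := hPadj c0 x hc0x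
          have k2 : P c1 = P c0 + 1 := hPadj c0 c1 hadj01
          have k3 : P x = P c1 + 1 := hPadj c1 x hx1
          refine hPne (P x) ?_
          calc P x = P c1 + 1 := k3
            _ = (P c0 + 1) + 1 := by rw [k2]
            _ = P x + 1 := by rw [← k1]
        have hdir : ∀ i, (Q n).Adj c1 (xs i) → a i = p := by
          intro i hi
          obtain ⟨mi, hmi_ne, hmi⟩ := hB c1 hc1 i hi
          have heq : (Pi.single m 1 : Fin n → ZMod 2) + Pi.single p 1
              = Pi.single (a i) 1 + Pi.single mi 1 := by
            have h0 : x + ((Pi.single m 1 : Fin n → ZMod 2) + Pi.single p 1)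
                = x + (Pi.single (a i) 1 + Pi.single mi 1) := by
              rw [← hc1eq, hmi, ha i, add_assoc]
            exact add_left_cancel h0
          rcases pair_eq hmp hmi_ne.symm heq with ⟨h1', _⟩ | ⟨_, h2'⟩
          · exact absurd h1' (hm_not i)
          · exact h2'.symm
        refine le_trans (Finset.card_le_card (hfsub c1 hnotx))
          (le_trans Finset.card_image_le (Finset.card_le_one.mpr ?_))
        intro i hi j hj
        simp only [Finset.mem_filter, Finset.mem_univ, true_and] at hi hj
        exact hainj ((hdir i hi).trans (hdir j hj).symm)
      have hmem1 : c1 ∈ C.erase c0 := Finset.mem_erase.mpr ⟨hne01, hc1⟩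
      have hsum : ∑ c ∈ C, (f c).card ≤ 2 * (C.card - 1) := by
        rw [← Finset.add_sum_erase C _ hc0, ← Finset.add_sum_erase _ _ hmem1]
        have h2 : ∑ c ∈ (C.erase c0).erase c1, (f c).card
            ≤ 2 * ((C.erase c0).erase c1).card := by
          calc ∑ c ∈ (C.erase c0).erase c1, (f c).card
              ≤ ∑ _c ∈ (C.erase c0).erase c1, 2 := Finset.sum_le_sum
                (fun c hc => hcard2 c (Finset.mem_of_mem_erase (Finset.mem_of_mem_erase hc)))
            _ = 2 * ((C.erase c0).erase c1).card := by
                rw [Finset.sum_const, smul_eq_mul, mul_comm]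
        have hcards : ((C.erase c0).erase c1).card = C.card - 2 := by
          rw [Finset.card_erase_of_mem hmem1, Finset.card_erase_of_mem hc0]
          omega
        rw [hcards] at h2
        omega
      exact le_trans h1 hsum
    · push_neg at hAex
      exfalso
      obtain ⟨c0, hc0⟩ := Finset.card_pos.mp (show 0 < C.card by omega)
      obtain ⟨c1, hc1, hadj01⟩ := hnbr c0 hc0
      have hleafP : ∀ c ∈ C, (∃ y ∈ Kf, (Q n).Adj c y) → P c = P x := by
        intro c hc ⟨y, hyK, hy⟩
        simp only [hKf, Finset.mem_insert, Finset.mem_image, Finset.mem_univ, true_and] at hyK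
        rcases hyK with rfl | ⟨i, rfl⟩
        · exact absurd hy (hAex c hc)
        · obtain ⟨mi, hmi_ne, hmi⟩ := hB c hc i hy
          rw [hmi, ha i, add_assoc, hPadd, hPadd, hPs, hPs]
          have : (1 : ZMod 2) + 1 = 0 := by decide
          rw [this, add_zero]
      have k0 : P c0 = P x := hleafP c0 hc0 (hall c0 hc0)
      have k1 : P c1 = P x := hleafP c1 hc1 (hall c1 hc1)
      have k2 : P c1 = P c0 + 1 := hPadj c0 c1 hadj01
      refine hPne (P x) ?_
      calc P x = P c1 := k1.symm
        _ = P c0 + 1 := k2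
        _ = P x + 1 := by rw [k0]
end

section
/- Let K be a star K_{1,r} in Q_n with 2 ≤ r ≤ n, and let C be a connected subgraph of Q_n disjoint from K with k ≥ 2 vertices. If the number of vertices of K adjacent to C equals exactly 2(k−1), then C is itself a star (i.e., C contains no path on 4 vertices). -/
private lemma Q_adj_dist {n : ℕ} {u v : Fin n → ZMod 2} (h : (Q n).Adj u v) :
    hammingDist u v = 1 := by
  rw [Q, SimpleGraph.fromRel_adj] at h
  rcases h.2 with h' | h'
  · exact h'
  · rwa [hammingDist_comm]

private lemma dist_filter {n : ℕ} (u v : Fin n → ZMod 2) :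
    hammingDist u v = (Finset.univ.filter fun i => u i ≠ v i).card := rfl

private lemma par_adj {n : ℕ} {u v : Fin n → ZMod 2} (h : (Q n).Adj u v) :
    (∑ i, u i) + (∑ i, v i) = 1 := by
  have hd := Q_adj_dist h
  have : (∑ i, u i) + (∑ i, v i) = ∑ i, (u i + v i) := by
    rw [Finset.sum_add_distrib]
  rw [this, ← Finset.sum_filter_add_sum_filter_not Finset.univ (fun i => u i ≠ v i)]
  have h1 : ∑ i ∈ Finset.univ.filter (fun i => u i ≠ v i), (u i + v i)
      = ∑ i ∈ Finset.univ.filter (fun i => u i ≠ v i), (1 : ZMod 2) := by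
    apply Finset.sum_congr rfl
    intro i hi
    have : u i ≠ v i := (Finset.mem_filter.mp hi).2
    revert this; generalize u i = a; generalize v i = b; revert a b; decide
  have h2 : ∑ i ∈ Finset.univ.filter (fun i => ¬ u i ≠ v i), (u i + v i) = 0 := by
    apply Finset.sum_eq_zero
    intro i hi
    have : u i = v i := not_not.mp (Finset.mem_filter.mp hi).2
    rw [this]; generalize v i = b; revert b; decide
  rw [h1, h2, Finset.sum_const, ← dist_filter, hd]
  simp

/-- If a connected subgraph C of Q_n disjoint from a star K_{1,r} with k ≥ 2 vertices
has exactly 2(k-1) neighbors among the star's vertices, then C contains no path on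
4 vertices (so C is a star). -/
theorem hypercube_star_connected_neighbors_eq (n r : ℕ) (hr : 2 ≤ r) (hrn : r ≤ n)
    (x : Fin n → ZMod 2) (xs : Fin r → (Fin n → ZMod 2))
    (hinj : Function.Injective xs) (hadj : ∀ i, (Q n).Adj x (xs i))
    (C : Finset (Fin n → ZMod 2)) (hk : 2 ≤ C.card)
    (hdisj : ∀ c ∈ C, c ∉ insert x (Set.range xs))
    (hconn : ((Q n).induce (C : Set (Fin n → ZMod 2))).Connected)
    (heq : ((insert x (Set.range xs)) ∩ {y | ∃ c ∈ C, (Q n).Adj c y}).ncard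
      = 2 * (C.card - 1)) :
    ¬ ∃ a b c d, a ∈ C ∧ b ∈ C ∧ c ∈ C ∧ d ∈ C ∧
      a ≠ b ∧ a ≠ c ∧ a ≠ d ∧ b ≠ c ∧ b ≠ d ∧ c ≠ d ∧
      (Q n).Adj a b ∧ (Q n).Adj b c ∧ (Q n).Adj c d := by
  classical
  rintro ⟨a, b, c, d, ha, hb, hc, hd, hab, hac, had, hbc, hbd, hcd, hA1, hA2, hA3⟩
  set par : (Fin n → ZMod 2) → ZMod 2 := fun v => ∑ i, v i with hpar
  have key : ∀ {u v : Fin n → ZMod 2}, (Q n).Adj u v → par u + par v = 1 := by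
    intro u v h; exact par_adj h
  have z2 : ∀ a b c : ZMod 2, a + b = 1 → c + b = 1 → a = c := by decide
  have z2' : ∀ a b c : ZMod 2, a + b = 1 → a + c = 1 → b = c := by decide
  have z2ne : ∀ a b : ZMod 2, a + b = 1 → a ≠ b := by decide
  -- the sets O and E
  set O := C.filter (fun v => par v ≠ par x) with hOdef
  set E := C.filter (fun v => par v = par x) with hEdef
  have hEO : E.card + O.card = C.card := Finset.card_filter_add_card_filter_not _
  -- O has at least 2 elements
  have hO : 2 ≤ O.card := by
    have pab := key hA1
    have pbc := key hA2
    have pcd := key hA3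
    by_cases hpa : par a = par x
    · refine Finset.one_lt_card.mpr ⟨b, ?_, d, ?_, hbd⟩
      · refine Finset.mem_filter.mpr ⟨hb, ?_⟩
        intro hbx
        exact z2ne _ _ pab (hpa.trans hbx.symm)
      · refine Finset.mem_filter.mpr ⟨hd, ?_⟩
        intro hdx
        have hpc : par c = par a := z2' (par b) (par c) (par a) pbc (by rw [add_comm]; exact pab)
        exact z2ne _ _ pcd ((hpc.trans hpa).trans hdx.symm)
    · refine Finset.one_lt_card.mpr ⟨a, Finset.mem_filter.mpr ⟨ha, hpa⟩, c, ?_, hac⟩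
      refine Finset.mem_filter.mpr ⟨hc, ?_⟩
      have hpc : par c = par a := z2' (par b) (par c) (par a) pbc (by rw [add_comm]; exact pab)
      rw [hpc]; exact hpa
  -- the set of leaves adjacent to C
  set LC := Finset.univ.filter (fun i : Fin r => ∃ c ∈ C, (Q n).Adj c (xs i)) with hLCdef
  -- bound ncard
  have hsub : ((insert x (Set.range xs)) ∩ {y | ∃ c ∈ C, (Q n).Adj c y})
      ⊆ ↑(insert x (LC.image xs)) := by
    rintro y ⟨hy1, hy2⟩
    rcases Set.mem_insert_iff.mp hy1 with rfl | ⟨i, rfl⟩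
    · simp
    · simp only [Finset.coe_insert, Set.mem_insert_iff, Finset.coe_image,
        Set.mem_image, Finset.mem_coe]
      right
      exact ⟨i, Finset.mem_filter.mpr ⟨Finset.mem_univ _, hy2⟩, rfl⟩
  have hN : 2 * (C.card - 1) ≤ 1 + LC.card := by
    rw [← heq]
    calc ((insert x (Set.range xs)) ∩ {y | ∃ c ∈ C, (Q n).Adj c y}).ncard
        ≤ (↑(insert x (LC.image xs)) : Set (Fin n → ZMod 2)).ncard :=
          Set.ncard_le_ncard hsub (Finset.finite_toSet _)
      _ = (insert x (LC.image xs)).card := Set.ncard_coe_finset _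
      _ ≤ 1 + (LC.image xs).card := by
          rw [add_comm]; exact Finset.card_insert_le _ _
      _ ≤ 1 + LC.card := by
          exact Nat.add_le_add_left (Finset.card_image_le) 1
  -- the coordinate map
  have hex : ∀ i : Fin r, ∃ t, (Finset.univ.filter fun s => x s ≠ xs i s) = {t} := by
    intro i
    exact Finset.card_eq_one.mp ((dist_filter x (xs i)).symm.trans (Q_adj_dist (hadj i)))
  choose jm hjm using hex
  have hjm_mem : ∀ i, x (jm i) ≠ xs i (jm i) := by
    intro i
    have : jm i ∈ (Finset.univ.filter fun s => x s ≠ xs i s) := by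
      rw [hjm i]; exact Finset.mem_singleton_self _
    exact (Finset.mem_filter.mp this).2
  have hjm_eq : ∀ i s, s ≠ jm i → x s = xs i s := by
    intro i s hs
    by_contra hne
    have : s ∈ (Finset.univ.filter fun s => x s ≠ xs i s) :=
      Finset.mem_filter.mpr ⟨Finset.mem_univ _, hne⟩
    rw [hjm i, Finset.mem_singleton] at this
    exact hs this
  have hjm_inj : Function.Injective jm := by
    intro i i' hii
    apply hinj
    funext s
    by_cases hs : s = jm i
    · subst hs
      have h1 := hjm_mem i
      have h2 := hjm_mem i'
      rw [← hii] at h2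
      revert h1 h2; generalize x (jm i) = p; generalize xs i (jm i) = q
      generalize xs i' (jm i) = w; revert p q w; decide
    · rw [← hjm_eq i s hs, ← hjm_eq i' s (hii ▸ hs)]
  -- LC ⊆ biUnion over E
  have hLCsub : LC ⊆ E.biUnion (fun c => Finset.univ.filter fun i => (Q n).Adj c (xs i)) := by
    intro i hi
    obtain ⟨c, hcC, hadj'⟩ := (Finset.mem_filter.mp hi).2
    refine Finset.mem_biUnion.mpr ⟨c, ?_, Finset.mem_filter.mpr ⟨Finset.mem_univ _, hadj'⟩⟩
    refine Finset.mem_filter.mpr ⟨hcC, ?_⟩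
    exact z2 _ _ _ (key hadj') (key (hadj i))
  -- each fiber has card ≤ 2
  have hfiber : ∀ c ∈ E, (Finset.univ.filter fun i => (Q n).Adj c (xs i)).card ≤ 2 := by
    intro c hcE
    obtain ⟨hcC, hpc⟩ := Finset.mem_filter.mp hcE
    set A := Finset.univ.filter fun i => (Q n).Adj c (xs i) with hAdef
    rcases A.eq_empty_or_nonempty with hAe | ⟨i0, hi0⟩
    · rw [hAe]; simp
    · set D := Finset.univ.filter (fun t => c t ≠ x t) with hDdef
      have hD2 : D.card ≤ 2 := by
        have h1 : hammingDist c x ≤ hammingDist c (xs i0) + hammingDist (xs i0) x :=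
          hammingDist_triangle _ _ _
        have h2 : hammingDist c (xs i0) = 1 := Q_adj_dist (Finset.mem_filter.mp hi0).2
        have h3 : hammingDist (xs i0) x = 1 := by
          rw [hammingDist_comm]; exact Q_adj_dist (hadj i0)
        rw [h2, h3] at h1
        calc D.card = hammingDist c x := (dist_filter c x).symm
          _ ≤ 2 := h1
      calc A.card ≤ D.card := by
            apply Finset.card_le_card_of_injOn jm
            · intro i hiA
              refine Finset.mem_filter.mpr ⟨Finset.mem_univ _, ?_⟩
              intro hcx
              -- show c = x for contradiction
              have hcne : c ≠ x := by
                intro h; subst h; exact hdisj c hcC (Set.mem_insert c _)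
              apply hcne
              have hdci : hammingDist c (xs i) = 1 := Q_adj_dist (Finset.mem_filter.mp hiA).2
              obtain ⟨t, ht⟩ := Finset.card_eq_one.mp ((dist_filter c (xs i)).symm.trans hdci)
              have hjt : jm i ∈ Finset.univ.filter (fun s => c s ≠ xs i s) := by
                refine Finset.mem_filter.mpr ⟨Finset.mem_univ _, ?_⟩
                rw [hcx]
                exact hjm_mem i
              rw [ht, Finset.mem_singleton] at hjt
              funext s
              by_cases hs : s = jm i
              · subst hs; exact hcx
              · have h4 : c s = xs i s := by
                  by_contra hne
                  have : s ∈ Finset.univ.filter (fun s => c s ≠ xs i s) :=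
                    Finset.mem_filter.mpr ⟨Finset.mem_univ _, hne⟩
                  rw [ht, Finset.mem_singleton] at this
                  exact hs (this.trans hjt.symm)
                rw [h4, ← hjm_eq i s hs]
            · intro i _ i' _ h
              exact hjm_inj h
        _ ≤ 2 := hD2
  -- put it together
  have hLCcard : LC.card ≤ 2 * E.card := by
    calc LC.card ≤ (E.biUnion fun c => Finset.univ.filter fun i => (Q n).Adj c (xs i)).card :=
          Finset.card_le_card hLCsub
      _ ≤ ∑ c ∈ E, (Finset.univ.filter fun i => (Q n).Adj c (xs i)).card :=
          Finset.card_biUnion_le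
      _ ≤ ∑ _c ∈ E, 2 := Finset.sum_le_sum hfiber
      _ = 2 * E.card := by rw [Finset.sum_const]; ring
  omega
end

section
/- For n ≥ r ≥ 2 and n ≥ 3, the K_{1,r}-structure connectivity of Q_n satisfies κ(Q_n; K_{1,r}) ≤ ⌈n/2⌉; that is, there exist ⌈n/2⌉ vertex-disjoint-or-overlapping subgraphs of Q_n each isomorphic to K_{1,r} whose removal disconnects Q_n. -/
/-!
Take the stars of `Q n` centered at `e_{2i} + e_{2i+1}` (indices mod `n`), `i < ⌈n/2⌉`, with
leaves `center + e_{2i+j}`, `j < r`. The leaves for `j = 0, 1` are `e_{2i+1}` and `e_{2i}`, so the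
stars cover every neighbour of `0`. Centers have even weight and leaves odd weight, so neither `0`
nor `e_1 + e_2`, which is not a center when `n ≥ 3`, is deleted: `0` becomes an isolated vertex
of a graph with at least two vertices.
-/

open SimpleGraph Fin.NatCast

lemma SimpleGraph.not_connected_induce_of_forall_adj_notMem {V : Type*} {G : SimpleGraph V}
    {s : Set V} {v w : V} (hv : v ∈ s) (hw : w ∈ s) (hvw : v ≠ w)
    (hiso : ∀ u, G.Adj v u → u ∉ s) : ¬ (G.induce s).Connected := by
  intro hconn
  obtain ⟨p⟩ := hconn.preconnected ⟨v, hv⟩ ⟨w, hw⟩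
  have hp : ¬ p.Nil := Walk.not_nil_of_ne (by simpa using hvw)
  exact hiso p.snd (Walk.adj_snd hp) p.snd.2

lemma Pi.single_left_injective {ι M : Type*} [DecidableEq ι] [Zero M] {x : M} (hx : x ≠ 0) :
    Function.Injective fun i : ι => Pi.single i x := fun i j h => by
  simpa [Pi.single_apply, hx, eq_comm] using congrFun h j

lemma Fin.add_natCast_ne_self {n k : ℕ} [NeZero n] (hk : 0 < k) (hkn : k < n) (a : Fin n) :
    a + k ≠ a := by
  intro h
  have : n ∣ k := by simpa using h
  exact absurd (Nat.le_of_dvd hk this) (by omega)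

lemma ZMod.eq_ite_iff_ne_zero_iff (a : ZMod 2) (p : Prop) [Decidable p] :
    a = (if p then 1 else 0) ↔ (a ≠ 0 ↔ p) := by
  revert a
  by_cases hp : p <;> simp only [hp, if_true, if_false, iff_true, iff_false, not_not] <;> decide

lemma hammingNorm_eq_one_iff {ι : Type*} [Fintype ι] [DecidableEq ι] {z : ι → ZMod 2} :
    hammingNorm z = 1 ↔ ∃ k, z = Pi.single k 1 := by
  simp only [hammingNorm, Finset.card_eq_one, Finset.ext_iff, Finset.mem_filter,
    Finset.mem_univ, true_and, Finset.mem_singleton, funext_iff, Pi.single_apply,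
    ZMod.eq_ite_iff_ne_zero_iff]

lemma Q_adj {n : ℕ} {x y : Fin n → ZMod 2} : (Q n).Adj x y ↔ ∃ k, y = x + Pi.single k 1 := by
  have hdist : (Q n).Adj x y ↔ hammingDist x y = 1 := by
    rw [Q, fromRel_adj, hammingDist_comm y x, or_self]
    exact ⟨And.right, fun h => ⟨by rintro rfl; simp at h, h⟩⟩
  simp only [hdist, hammingDist_eq_hammingNorm, hammingNorm_eq_one_iff, neg_add_eq_iff_eq_add]

namespace Hypercube

variable {n : ℕ} [NeZero n]

def starCenter (a : Fin n) : Fin n → ZMod 2 := Pi.single a 1 + Pi.single (a + 1) 1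

def starLeaf (a k : Fin n) : Fin n → ZMod 2 := starCenter a + Pi.single (a + k) 1

def star {ι : Type*} (a : Fin n) (κ : ι → Fin n) : Set (Fin n → ZMod 2) :=
  insert (starCenter a) (Set.range fun j => starLeaf a (κ j))

lemma starLeaf_injective (a : Fin n) : Function.Injective (starLeaf a) :=
  (add_right_injective _).comp <|
    (Pi.single_left_injective one_ne_zero).comp (add_right_injective a)

lemma starCenter_adj_starLeaf (a k : Fin n) : (Q n).Adj (starCenter a) (starLeaf a k) :=
  Q_adj.2 ⟨_, rfl⟩

lemma starLeaf_zero (a : Fin n) : starLeaf a 0 = Pi.single (a + 1) 1 := by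
  rw [starLeaf, starCenter, add_zero, add_comm (Pi.single a 1), CharTwo.add_cancel_right]

lemma starLeaf_one (a : Fin n) : starLeaf a 1 = Pi.single a 1 := by
  rw [starLeaf, starCenter, CharTwo.add_cancel_right]

lemma sum_starCenter (a : Fin n) : ∑ k, starCenter a k = 0 := by
  simp [starCenter, Finset.sum_add_distrib, CharTwo.add_self_eq_zero]

lemma sum_starLeaf (a k : Fin n) : ∑ i, starLeaf a k i = 1 := by
  simp [starLeaf, Finset.sum_add_distrib, sum_starCenter]

lemma starCenter_ne_zero (hn : 2 ≤ n) (a : Fin n) : starCenter a ≠ 0 := by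
  intro h
  have := congrFun h a
  simp [starCenter, show n ≠ 1 by omega] at this

lemma starCenter_injective (hn : 3 ≤ n) : Function.Injective (starCenter (n := n)) := by
  intro a b h
  by_contra hab
  have ha := congrFun h a
  have hb := congrFun h b
  simp [starCenter, Pi.single_apply, hab, Ne.symm hab, show n ≠ 1 by omega] at ha hb
  refine Fin.add_natCast_ne_self (k := 2) two_pos hn a ?_
  rw [Nat.cast_ofNat, ← one_add_one_eq_two, ← add_assoc, ← hb, ← ha]

lemma notMem_star {a : Fin n} {x : Fin n → ZMod 2} (hx : ∑ k, x k = 0) (hxa : x ≠ starCenter a)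
    {ι : Type*} (κ : ι → Fin n) : x ∉ star a κ := by
  rintro (h | ⟨j, rfl⟩)
  · exact hxa h
  · simp [sum_starLeaf] at hx

lemma exists_eq_two_mul_or_two_mul_add_one (m : Fin n) :
    ∃ i < (n + 1) / 2, m = ((2 * i : ℕ) : Fin n) ∨ m = ((2 * i : ℕ) : Fin n) + 1 := by
  obtain ⟨i, hi | hi⟩ := Nat.even_or_odd' m
  · exact ⟨i, by omega, Or.inl (by rw [← hi, Fin.cast_val_eq_self])⟩
  · exact ⟨i, by omega, Or.inr (by rw [← Nat.cast_add_one, ← hi, Fin.cast_val_eq_self])⟩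

lemma exists_single_mem_star {r : ℕ} (hr : 2 ≤ r) (hrn : r ≤ n) (m : Fin n) :
    ∃ i < (n + 1) / 2, Pi.single m 1 ∈ star ((2 * i : ℕ) : Fin n) (Fin.castLE hrn) := by
  obtain ⟨i, hi, hm | hm⟩ := exists_eq_two_mul_or_two_mul_add_one m
  · have h1 : Fin.castLE hrn ⟨1, hr⟩ = 1 :=
      Fin.ext (by simp [Nat.mod_eq_of_lt (show 1 < n by omega)])
    exact ⟨i, hi, Or.inr ⟨⟨1, hr⟩, by simp only [h1, starLeaf_one, hm]⟩⟩
  · have h0 : Fin.castLE hrn ⟨0, by omega⟩ = 0 := Fin.ext (by simp)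
    exact ⟨i, hi, Or.inr ⟨⟨0, by omega⟩, by simp only [h0, starLeaf_zero, hm]⟩⟩

end Hypercube

open Hypercube

/-- For n ≥ r ≥ 2, n ≥ 3, there exist ⌈n/2⌉ subgraphs of Q_n each isomorphic to
K_{1,r} whose removal disconnects Q_n; hence κ(Q_n; K_{1,r}) ≤ ⌈n/2⌉. -/
theorem hypercube_star_structure_cut (n r : ℕ) (hr : 2 ≤ r) (hrn : r ≤ n) (hn : 3 ≤ n) :
    ∃ S : Fin ((n + 1) / 2) → Set (Fin n → ZMod 2),
      (∀ i, ∃ (x : Fin n → ZMod 2) (ℓ : Fin r → (Fin n → ZMod 2)),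
        Function.Injective ℓ ∧ (∀ j, (Q n).Adj x (ℓ j)) ∧ S i = insert x (Set.range ℓ)) ∧
      {v | ∀ i, v ∉ S i}.Nonempty ∧
      ¬ ((Q n).induce {v | ∀ i, v ∉ S i}).Connected := by
  have : NeZero n := ⟨by omega⟩
  let a : Fin ((n + 1) / 2) → Fin n := fun i => ((2 * i : ℕ) : Fin n)
  let S : Fin ((n + 1) / 2) → Set (Fin n → ZMod 2) := fun i => star (a i) (Fin.castLE hrn)
  have ha : ∀ i, a i ≠ 1 := fun i h => by
    have hi := i.isLt
    have := congrArg Fin.val h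
    rw [Fin.val_natCast, Fin.val_one', Nat.mod_eq_of_lt (by omega), Nat.mod_eq_of_lt (by omega)]
      at this
    omega
  have hzero : (0 : Fin n → ZMod 2) ∈ {v | ∀ i, v ∉ S i} := fun i =>
    notMem_star (by simp) (starCenter_ne_zero (by omega) _).symm _
  have hcenter_one : starCenter 1 ∈ {v | ∀ i, v ∉ S i} := fun i =>
    notMem_star (sum_starCenter 1) ((starCenter_injective hn).ne (ha i).symm) _
  refine ⟨S, fun i => ⟨_, _, (starLeaf_injective _).comp (Fin.castLE_injective hrn),
    fun j => starCenter_adj_starLeaf _ _, rfl⟩, ⟨0, hzero⟩,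
    not_connected_induce_of_forall_adj_notMem hzero hcenter_one (starCenter_ne_zero (by omega) 1).symm ?_⟩
  rintro u hu hS
  obtain ⟨m, rfl⟩ := Q_adj.1 hu
  obtain ⟨i, hi, hm⟩ := exists_single_mem_star hr hrn m
  exact hS ⟨i, hi⟩ (by rwa [zero_add])
end

section
/- The folded hypercube FQ_n is bipartite if and only if n is odd. -/
open SimpleGraph

section ParityColoring

variable {ι : Type*} [Fintype ι]

theorem sum_sub_sum_eq_hammingDist (u v : ι → ZMod 2) :
    ∑ i, u i - ∑ i, v i = hammingDist u v := by
  rw [← Finset.sum_sub_distrib, hammingDist, Finset.card_filter]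
  push_cast
  exact Finset.sum_congr rfl fun i _ =>
    (by decide : ∀ a b : ZMod 2, a - b = if a ≠ b then 1 else 0) (u i) (v i)

theorem colorable_two_of_forall_adj_odd_hammingDist {G : SimpleGraph (ι → ZMod 2)}
    (h : ∀ u v, G.Adj u v → Odd (hammingDist u v)) : G.Colorable 2 := by
  have c : G.Coloring (ZMod 2) := Coloring.mk (fun u => ∑ i, u i) fun {u v} huv heq => by
    have := sum_sub_sum_eq_hammingDist u v
    rw [heq, sub_self, (h u v huv).natCast_zmod_two] at this
    exact zero_ne_one this
  simpa using c.colorable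

end ParityColoring

theorem odd_hammingDist_of_FQ_adj {n : ℕ} (hn : Odd n) {u v : Fin n → ZMod 2}
    (h : (FQ n).Adj u v) : Odd (hammingDist u v) := by
  rw [FQ, fromRel_adj, hammingDist_comm v u, or_self] at h
  rcases h.2 with h | h <;> rw [h]
  · exact odd_one
  · exact hn

theorem Q_le_FQ (n : ℕ) : Q n ≤ FQ n := by
  intro u v h
  rw [Q, fromRel_adj] at h
  rw [FQ, fromRel_adj]
  exact ⟨h.1, h.2.imp Or.inl Or.inl⟩

theorem FQ_adj_zero_one {n : ℕ} (hn : n ≠ 0) : (FQ n).Adj 0 1 := by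
  have h01 : hammingDist (0 : Fin n → ZMod 2) 1 = n := by
    simp [hammingDist]
  refine (fromRel_adj _ _ _).2 ⟨fun h => hn ?_, Or.inl (Or.inr h01)⟩
  rw [← h01, h, hammingDist_self]

def prefixOnes (n k : ℕ) : Fin n → ZMod 2 := fun i => if (i : ℕ) < k then 1 else 0

theorem hammingDist_prefixOnes_succ {n k : ℕ} (hk : k < n) :
    hammingDist (prefixOnes n k) (prefixOnes n (k + 1)) = 1 := by
  rw [hammingDist, Finset.card_eq_one]
  refine ⟨⟨k, hk⟩, Finset.ext fun i => ?_⟩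
  rw [Finset.mem_filter_univ, Finset.mem_singleton, Fin.ext_iff]
  unfold prefixOnes
  split_ifs <;> simp <;> omega

theorem Q_adj_prefixOnes_succ {n k : ℕ} (hk : k < n) :
    (Q n).Adj (prefixOnes n k) (prefixOnes n (k + 1)) := by
  have h := hammingDist_prefixOnes_succ hk
  refine (fromRel_adj _ _ _).2 ⟨fun he => ?_, Or.inl h⟩
  rw [he, hammingDist_self] at h
  exact zero_ne_one h

theorem exists_Q_walk_prefixOnes {n k : ℕ} (hk : k ≤ n) :
    ∃ w : (Q n).Walk 0 (prefixOnes n k), w.length = k := by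
  induction k with
  | zero => exact ⟨Walk.nil.copy rfl (funext fun _ => (if_neg (Nat.not_lt_zero _)).symm), rfl⟩
  | succ k ih =>
    obtain ⟨w, hw⟩ := ih (Nat.le_of_succ_le hk)
    exact ⟨w.concat (Q_adj_prefixOnes_succ hk), by rw [Walk.length_concat, hw]⟩

theorem exists_FQ_loop_length_succ {n : ℕ} (hn : n ≠ 0) :
    ∃ w : (FQ n).Walk 0 0, w.length = n + 1 := by
  obtain ⟨w, hw⟩ := exists_Q_walk_prefixOnes (le_refl n)
  have hone : prefixOnes n n = 1 := funext fun i => if_pos i.isLt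
  refine ⟨((w.copy rfl hone).mapLe (Q_le_FQ n)).concat (FQ_adj_zero_one hn).symm, ?_⟩
  rw [Walk.length_concat, Walk.length_mapLe, Walk.length_copy, hw]

/-- FQ_n is bipartite if and only if n is odd. -/
theorem folded_hypercube_bipartite_iff (n : ℕ) (hn : 1 ≤ n) :
    (FQ n).Colorable 2 ↔ Odd n := by
  refine ⟨fun h => ?_, fun h => colorable_two_of_forall_adj_odd_hammingDist
    fun _ _ => odd_hammingDist_of_FQ_adj h⟩
  obtain ⟨w, hw⟩ := exists_FQ_loop_length_succ (Nat.one_le_iff_ne_zero.1 hn)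
  have := two_colorable_iff_forall_loop_even.1 h 0 w
  rwa [hw, Nat.even_add_one, Nat.not_even_iff_odd] at this
end

section
/- If n is even (so FQ_n contains an odd cycle), then the shortest odd cycle in FQ_n has length n+1. -/
/-! Record each step of a closed walk in FQ_n as the difference of its endpoints: a unit vector or
the all-ones vector `1`. If `K` steps are `1`, the remaining `m` unit steps sum to `K • 1`. The
weight of a sum of `m` unit vectors is at most `m` and congruent to `m` mod 2; so for even `K` the
length `K + m` is even, and for odd `K` the unit steps sum to `1`, whence `m ≥ n` and the length is
at least `n + 1`. Conversely the hypercube path `0, e₀, e₀ + e₁, …, 1` closes up through the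
antipodal edge to a cycle of length `n + 1`. -/

open SimpleGraph

theorem hammingNorm_add_le {ι : Type*} {β : ι → Type*} [Fintype ι] [∀ i, AddZeroClass (β i)]
    [∀ i, DecidableEq (β i)] (x y : ∀ i, β i) :
    hammingNorm (x + y) ≤ hammingNorm x + hammingNorm y := by
  classical
  refine (Finset.card_le_card fun i => ?_).trans (Finset.card_union_le _ _)
  simp only [Finset.mem_filter, Finset.mem_union, Finset.mem_univ, true_and, Pi.add_apply]
  contrapose!
  rintro ⟨hx, hy⟩
  simp [hx, hy]

theorem hammingNorm_one {ι R : Type*} [Fintype ι] [MulZeroOneClass R] [Nontrivial R]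
    [DecidableEq R] : hammingNorm (1 : ι → R) = Fintype.card ι := by
  simp [hammingNorm]

section ZModTwo

variable {ι : Type*} [Fintype ι]

theorem ZMod.natCast_hammingNorm (x : ι → ZMod 2) : (hammingNorm x : ZMod 2) = ∑ i, x i := by
  classical
  rw [← Finset.sum_filter_ne_zero, hammingNorm, Finset.cast_card]
  exact Finset.sum_congr rfl fun i hi => (Fin.eq_one_of_ne_zero _ (Finset.mem_filter.mp hi).2).symm

theorem ZMod.natCast_hammingNorm_list_sum (l : List (ι → ZMod 2)) :
    (hammingNorm l.sum : ZMod 2) = ((l.map hammingNorm).sum : ℕ) := by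
  induction l with
  | nil => simp
  | cons x l ih =>
    rw [List.sum_cons, List.map_cons, List.sum_cons, Nat.cast_add, ← ih,
      ZMod.natCast_hammingNorm, ZMod.natCast_hammingNorm, ZMod.natCast_hammingNorm,
      ← Finset.sum_add_distrib]
    rfl

theorem eq_one_of_hammingNorm_eq_card {x : ι → ZMod 2} (h : hammingNorm x = Fintype.card ι) :
    x = 1 := by
  funext i
  have hx : ∀ j ∈ Finset.univ, x j ≠ 0 :=
    Finset.card_filter_eq_iff.mp (h.trans Finset.card_univ.symm)
  exact Fin.eq_one_of_ne_zero _ (hx i (Finset.mem_univ i))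

theorem card_add_one_le_length_of_sum_eq_zero {l : List (ι → ZMod 2)}
    (hl : ∀ d ∈ l, hammingNorm d = 1 ∨ d = 1) (hsum : l.sum = 0) (hodd : Odd l.length) :
    Fintype.card ι + 1 ≤ l.length := by
  classical
  set U := l.filter (· ≠ 1)
  set K := l.count 1
  have hperm : (List.replicate K 1 ++ U).Perm l := by
    rw [← List.filter_eq]
    simpa [U, decide_not] using List.filter_append_perm (· = (1 : ι → ZMod 2)) l
  have hlen : K + U.length = l.length := by simpa using hperm.length_eq
  have hUsum : U.sum = fun _ => (K : ZMod 2) := by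
    have h := hperm.sum_eq
    rw [List.sum_append, List.sum_replicate, nsmul_one, hsum] at h
    exact funext fun i => (CharTwo.add_eq_zero.mp (congrFun h i)).symm
  have hUnorm : (U.map hammingNorm).sum = U.length := by
    rw [List.map_congr_left (g := fun _ => 1), List.map_const', List.sum_replicate, smul_eq_mul,
      mul_one]
    intro d hd
    obtain ⟨hd, hd1⟩ := List.mem_filter.mp hd
    exact (hl d hd).resolve_right (by simpa using hd1)
  rcases Nat.even_or_odd K with hK | hK
  · have hU0 : U.sum = 0 := by
      rw [hUsum, (ZMod.natCast_eq_zero_iff_even).mpr hK]; rfl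
    have hUeven : Even U.length := by
      rw [← ZMod.natCast_eq_zero_iff_even, ← hUnorm, ← ZMod.natCast_hammingNorm_list_sum, hU0,
        hammingNorm_zero, Nat.cast_zero]
    exact absurd hodd (by rw [← hlen, Nat.not_odd_iff_even]; exact hK.add hUeven)
  · have hU1 : U.sum = 1 := by
      rw [hUsum, (ZMod.natCast_eq_one_iff_odd).mpr hK]; rfl
    have hcard : Fintype.card ι ≤ U.length := by
      rw [← hUnorm, ← hammingNorm_one (R := ZMod 2), ← hU1]
      exact List.le_sum_of_subadditive _ hammingNorm_zero.le hammingNorm_add_le U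
    have := hK.pos
    omega

end ZModTwo

theorem SimpleGraph.Walk.sum_darts_sub {V : Type*} [AddCommGroup V] {G : SimpleGraph V}
    {u v : V} (w : G.Walk u v) : (w.darts.map fun d => d.fst - d.snd).sum = u - v := by
  induction w with
  | nil => simp
  | cons h p ih =>
    rw [Walk.darts_cons, List.map_cons, List.sum_cons, ih]
    abel

theorem Q_adj_s16 {n : ℕ} {u v : Fin n → ZMod 2} : (Q n).Adj u v ↔ hammingDist u v = 1 := by
  rw [Q, fromRel_adj, hammingDist_comm v u, or_self]
  exact ⟨And.right, fun h => ⟨fun huv => by simp [huv] at h, h⟩⟩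

theorem FQ_adj {n : ℕ} {u v : Fin n → ZMod 2} :
    (FQ n).Adj u v ↔ u ≠ v ∧ (hammingDist u v = 1 ∨ hammingDist u v = n) := by
  rw [FQ, fromRel_adj, hammingDist_comm v u, or_self]

namespace FQ

theorem hammingNorm_sub_eq_one_or_sub_eq_one {n : ℕ} {u v : Fin n → ZMod 2}
    (h : (FQ n).Adj u v) : hammingNorm (u - v) = 1 ∨ u - v = 1 := by
  have hdist : hammingDist u v = hammingNorm (u - v) := by
    rw [hammingDist_comm, hammingDist_eq_hammingNorm, neg_add_eq_sub]
  rcases (FQ_adj.mp h).2 with h1 | hn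
  · exact .inl (hdist ▸ h1)
  · exact .inr (eq_one_of_hammingNorm_eq_card (by rw [← hdist, hn, Fintype.card_fin]))

theorem add_one_le_length_of_odd {n : ℕ} {u : Fin n → ZMod 2} (w : (FQ n).Walk u u)
    (hodd : Odd w.length) : n + 1 ≤ w.length := by
  have := card_add_one_le_length_of_sum_eq_zero (l := w.darts.map fun d => d.fst - d.snd)
    (by simpa using fun d _ => hammingNorm_sub_eq_one_or_sub_eq_one d.adj)
    (by rw [w.sum_darts_sub, sub_self]) (by simpa using hodd)
  simpa using this

def prefixOnes (n k : ℕ) : Fin n → ZMod 2 := fun j => if (j : ℕ) < k then 1 else 0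

@[simp] theorem prefixOnes_zero (n : ℕ) : prefixOnes n 0 = 0 := by
  funext j; simp [prefixOnes]

@[simp] theorem prefixOnes_self (n : ℕ) : prefixOnes n n = 1 := by
  funext j; simp [prefixOnes]

theorem prefixOnes_injOn (n : ℕ) : Set.InjOn (prefixOnes n) (Set.Iic n) := by
  have key : ∀ a b, a < b → b ≤ n → prefixOnes n a ≠ prefixOnes n b := fun a b hab hb h => by
    simpa [prefixOnes, hab] using congrFun h ⟨a, hab.trans_le hb⟩
  intro a ha b hb h
  rcases lt_trichotomy a b with hab | rfl | hab
  · exact absurd h (key a b hab hb)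
  · rfl
  · exact absurd h.symm (key b a hab ha)

theorem Q_adj_prefixOnes_succ {n k : ℕ} (hk : k < n) :
    (Q n).Adj (prefixOnes n k) (prefixOnes n (k + 1)) := by
  rw [Q_adj_s16, hammingDist, Finset.card_eq_one]
  refine ⟨⟨k, hk⟩, Finset.ext fun j => ?_⟩
  rw [Finset.mem_filter_univ, Finset.mem_singleton, Fin.ext_iff]
  simp only [prefixOnes]
  split_ifs <;> simp <;> omega

def prefixOnesWalk (n : ℕ) : (k : ℕ) → k ≤ n → (Q n).Walk (prefixOnes n 0) (prefixOnes n k)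
  | 0, _ => .nil
  | k + 1, hk => (prefixOnesWalk n k (by omega)).concat (Q_adj_prefixOnes_succ hk)

theorem length_prefixOnesWalk {n k : ℕ} (hk : k ≤ n) : (prefixOnesWalk n k hk).length = k := by
  induction k with
  | zero => rfl
  | succ k ih => rw [prefixOnesWalk, Walk.length_concat, ih]

theorem support_prefixOnesWalk {n k : ℕ} (hk : k ≤ n) :
    (prefixOnesWalk n k hk).support = (List.range (k + 1)).map (prefixOnes n) := by
  induction k with
  | zero => rfl
  | succ k ih =>
    rw [prefixOnesWalk, Walk.support_concat, ih, List.range_succ (n := k + 1),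
      List.map_append, List.map_singleton]

theorem isPath_prefixOnesWalk {n k : ℕ} (hk : k ≤ n) : (prefixOnesWalk n k hk).IsPath := by
  refine Walk.IsPath.mk' ?_
  rw [support_prefixOnesWalk]
  refine List.nodup_range.map_on fun a ha b hb h => prefixOnes_injOn n ?_ ?_ h
  · exact Set.mem_Iic.mpr (by rw [List.mem_range] at ha; omega)
  · exact Set.mem_Iic.mpr (by rw [List.mem_range] at hb; omega)

theorem exists_isCycle_length {n : ℕ} (hn : 2 ≤ n) :
    ∃ (u : Fin n → ZMod 2) (w : (FQ n).Walk u u), w.IsCycle ∧ w.length = n + 1 := by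
  have hdist : hammingDist (prefixOnes n n) (prefixOnes n 0) = n := by
    rw [prefixOnes_self, prefixOnes_zero, hammingDist_zero_right, hammingNorm_one, Fintype.card_fin]
  have hadj : (FQ n).Adj (prefixOnes n n) (prefixOnes n 0) :=
    FQ_adj.mpr ⟨hammingDist_ne_zero.mp (by omega), .inr hdist⟩
  have hQ : ¬ (Q n).Adj (prefixOnes n n) (prefixOnes n 0) := by
    rw [Q_adj_s16, hdist]; omega
  let p := (prefixOnesWalk n n le_rfl).mapLe (Q_le_FQ n)
  refine ⟨_, .cons hadj p, ?_, ?_⟩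
  · rw [Walk.cons_isCycle_iff]
    refine ⟨(Walk.isPath_mapLe _).mpr (isPath_prefixOnesWalk le_rfl), fun he => hQ ?_⟩
    exact (prefixOnesWalk n n le_rfl).adj_of_mem_edges (by rwa [Walk.edges_mapLe_eq_edges] at he)
  · rw [Walk.length_cons, Walk.length_mapLe, length_prefixOnesWalk]

end FQ

theorem folded_hypercube_odd_girth_general (n : ℕ) (hn : 2 ≤ n) :
    (∃ (u : Fin n → ZMod 2) (w : (FQ n).Walk u u), w.IsCycle ∧ w.length = n + 1) ∧
    (∀ (u : Fin n → ZMod 2) (w : (FQ n).Walk u u),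
      w.IsCycle → Odd w.length → n + 1 ≤ w.length) :=
  ⟨FQ.exists_isCycle_length hn, fun _ w _ => FQ.add_one_le_length_of_odd w⟩

/-- If n is even, the shortest odd cycle in FQ_n has length n + 1. -/
theorem folded_hypercube_odd_girth (n : ℕ) (hn : 2 ≤ n) (heven : Even n) :
    (∃ (u : Fin n → ZMod 2) (w : (FQ n).Walk u u), w.IsCycle ∧ w.length = n + 1) ∧
    (∀ (u : Fin n → ZMod 2) (w : (FQ n).Walk u u),
      w.IsCycle → Odd w.length → n + 1 ≤ w.length) :=
  folded_hypercube_odd_girth_general n hn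
end

section
/- Let K be a star K_{1,r} in FQ_n with n ≥ 5 and 2 ≤ r ≤ n+1, and let C be a connected subgraph of FQ_n disjoint from K with k = |V(C)| ≥ 2 vertices. Then at most 2(k−1) vertices of K have a neighbor in C. -/
/-!
`FQ n` is the Cayley graph of `(ZMod 2)ⁿ` with generators `e₁, …, eₙ, 1`, and any `n` of these
`n + 1` generators are linearly independent. A closed walk of odd length `ℓ ≤ n` would write `0`
as the sum of a nonempty set of at most `ℓ` generators (repeated steps cancel in pairs), so `FQ n` has no odd closed walk of
length `≤ n`; and a 4-cycle `a u b v` forces `u + v = a + b`, so two distinct vertices have at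
most two common neighbours.

Hence a vertex `c` outside the star sees at most two star vertices (only `x` if `c ∼ x`,
otherwise only common neighbours of `c` and `x`), and two adjacent such vertices together see at
most two (if neither is adjacent to `x`, star vertices seen by both would close a 5-cycle).
Starting from an edge of `C` and adding the other `k - 2` vertices one at a time gives at most
`2 + 2 (k - 2) = 2 (k - 1)` star vertices.
-/

open Finset

namespace SimpleGraph

variable {V : Type*} {G : SimpleGraph V}

lemma exists_adj_of_induce_connected {s : Set V} (hconn : (G.induce s).Connected)
    (hs : s.Nontrivial) : ∃ c ∈ s, ∃ c' ∈ s, G.Adj c c' := by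
  have : Nontrivial s := hs.coe_sort
  obtain ⟨a, ha⟩ := hs.nonempty
  obtain ⟨⟨c', hc'⟩, hadj⟩ := hconn.preconnected.exists_adj_of_nontrivial ⟨a, ha⟩
  exact ⟨a, ha, c', hc', hadj⟩

lemma ncard_inter_setOf_exists_adj_le_mul_card (K : Set V) {m : ℕ} (C : Finset V)
    (h : ∀ c ∈ C, (K ∩ G.neighborSet c).ncard ≤ m) :
    (K ∩ {y | ∃ c ∈ C, G.Adj c y}).ncard ≤ m * #C := by
  classical
  induction C using Finset.induction_on with
  | empty => simp
  | insert a C ha ih =>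
    have hsplit : K ∩ {y | ∃ c ∈ insert a C, G.Adj c y} =
        K ∩ G.neighborSet a ∪ K ∩ {y | ∃ c ∈ C, G.Adj c y} := by
      ext y
      simp [or_and_right, exists_or, and_or_left]
    rw [hsplit, card_insert_of_notMem ha, mul_add_one]
    have := ih fun c hc => h c (mem_insert_of_mem hc)
    have := h a (mem_insert_self a C)
    exact (Set.ncard_union_le _ _).trans (by omega)

lemma ncard_inter_setOf_exists_adj_le_of_ne [Finite V] {K : Set V} {m : ℕ} {C : Finset V}
    {c c' : V} (hc : c ∈ C) (hc' : c' ∈ C) (hne : c ≠ c')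
    (hpair : (K ∩ (G.neighborSet c ∪ G.neighborSet c')).ncard ≤ m)
    (h : ∀ d ∈ C, (K ∩ G.neighborSet d).ncard ≤ m) :
    (K ∩ {y | ∃ d ∈ C, G.Adj d y}).ncard ≤ m * (#C - 1) := by
  classical
  set C' := (C.erase c).erase c'
  have hcard : #C = #C' + 2 := by
    rw [card_erase_of_mem (mem_erase.mpr ⟨hne.symm, hc'⟩), card_erase_of_mem hc]
    have : 1 < #C := one_lt_card.mpr ⟨c, hc, c', hc', hne⟩
    omega
  have hsub : K ∩ {y | ∃ d ∈ C, G.Adj d y} ⊆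
      K ∩ (G.neighborSet c ∪ G.neighborSet c') ∪ K ∩ {y | ∃ d ∈ C', G.Adj d y} := by
    rintro y ⟨hyK, d, hd, hdy⟩
    by_cases hdc : d = c
    · exact Or.inl ⟨hyK, Or.inl (hdc ▸ hdy)⟩
    by_cases hdc' : d = c'
    · exact Or.inl ⟨hyK, Or.inr (hdc' ▸ hdy)⟩
    exact Or.inr ⟨hyK, d, mem_erase.mpr ⟨hdc', mem_erase.mpr ⟨hdc, hd⟩⟩, hdy⟩
  have hrest := ncard_inter_setOf_exists_adj_le_mul_card K C' fun d hd =>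
    h d (mem_of_mem_erase (mem_of_mem_erase hd))
  calc (K ∩ {y | ∃ d ∈ C, G.Adj d y}).ncard
      ≤ (K ∩ (G.neighborSet c ∪ G.neighborSet c')).ncard +
        (K ∩ {y | ∃ d ∈ C', G.Adj d y}).ncard :=
        (Set.ncard_le_ncard hsub).trans (Set.ncard_union_le _ _)
    _ ≤ m * (#C - 1) := by
        rw [hcard, show #C' + 2 - 1 = #C' + 1 by omega, mul_add_one]
        omega

variable {x c c' : V} {S : Set V}

lemma not_adj_of_adj_of_adj (h₃ : ∀ u (w : G.Walk u u), w.length ≠ 3) {a b : V}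
    (hab : G.Adj a b) (hbc : G.Adj b c) : ¬G.Adj c a :=
  fun hca => h₃ a (.cons hab (.cons hbc (.cons hca .nil))) rfl

lemma insert_inter_neighborSet_subset_singleton (h₃ : ∀ u (w : G.Walk u u), w.length ≠ 3)
    (hS : S ⊆ G.neighborSet x) (hcx : G.Adj c x) : insert x S ∩ G.neighborSet c ⊆ {x} := by
  rintro y ⟨rfl | hy, hcy⟩
  · rfl
  · exact absurd hcy.symm (not_adj_of_adj_of_adj h₃ hcx (hS hy))

lemma insert_inter_neighborSet_subset_commonNeighbors (hS : S ⊆ G.neighborSet x)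
    (hcx : ¬G.Adj c x) : insert x S ∩ G.neighborSet c ⊆ G.commonNeighbors c x := by
  rintro y ⟨rfl | hy, hcy⟩
  · exact absurd hcy hcx
  · exact ⟨hcy, hS hy⟩

lemma ncard_insert_inter_neighborSet_le_two [Finite V]
    (h₃ : ∀ u (w : G.Walk u u), w.length ≠ 3)
    (hcommon : ∀ a b, a ≠ b → (G.commonNeighbors a b).ncard ≤ 2)
    (hS : S ⊆ G.neighborSet x) (hc : c ∉ insert x S) :
    (insert x S ∩ G.neighborSet c).ncard ≤ 2 := by
  by_cases hcx : G.Adj c x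
  · calc _ ≤ ({x} : Set V).ncard :=
          Set.ncard_le_ncard (insert_inter_neighborSet_subset_singleton h₃ hS hcx)
      _ ≤ 2 := by simp
  · exact (Set.ncard_le_ncard (insert_inter_neighborSet_subset_commonNeighbors hS hcx)).trans
      (hcommon c x fun h => hc (h ▸ Set.mem_insert x S))

lemma ncard_insert_inter_neighborSet_union_le_two_of_adj [Finite V]
    (h₃ : ∀ u (w : G.Walk u u), w.length ≠ 3)
    (hcommon : ∀ a b, a ≠ b → (G.commonNeighbors a b).ncard ≤ 2)
    (hS : S ⊆ G.neighborSet x) (hcc' : G.Adj c c') (hc : c ∉ insert x S)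
    (hc' : c' ∉ insert x S) (hcx : G.Adj c x) :
    (insert x S ∩ (G.neighborSet c ∪ G.neighborSet c')).ncard ≤ 2 := by
  have hc'x : ¬G.Adj c' x := not_adj_of_adj_of_adj h₃ hcx.symm hcc'
  have h₁ : (insert x S ∩ G.neighborSet c).ncard ≤ 1 :=
    (Set.ncard_le_ncard (insert_inter_neighborSet_subset_singleton h₃ hS hcx)).trans
      (Set.ncard_singleton x).le
  have h₂ : (insert x S ∩ G.neighborSet c').ncard ≤ 1 := by
    have hsub : insert x S ∩ G.neighborSet c' ⊆ G.commonNeighbors c' x \ {c} :=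
      fun y hy => ⟨insert_inter_neighborSet_subset_commonNeighbors hS hc'x hy,
        fun hyc : y = c => hc (hyc ▸ hy.1)⟩
    have hmem : c ∈ G.commonNeighbors c' x := ⟨hcc'.symm, hcx.symm⟩
    have := hcommon c' x fun h => hc' (h ▸ Set.mem_insert x S)
    calc _ ≤ (G.commonNeighbors c' x \ {c}).ncard := Set.ncard_le_ncard hsub
      _ = (G.commonNeighbors c' x).ncard - 1 := Set.ncard_sdiff_singleton_of_mem hmem
      _ ≤ 1 := by omega
  rw [Set.inter_union_distrib_left]
  exact (Set.ncard_union_le _ _).trans (by omega)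

lemma ncard_insert_inter_neighborSet_union_le_two [Finite V]
    (h₃ : ∀ u (w : G.Walk u u), w.length ≠ 3) (h₅ : ∀ u (w : G.Walk u u), w.length ≠ 5)
    (hcommon : ∀ a b, a ≠ b → (G.commonNeighbors a b).ncard ≤ 2)
    (hS : S ⊆ G.neighborSet x) (hcc' : G.Adj c c') (hc : c ∉ insert x S)
    (hc' : c' ∉ insert x S) :
    (insert x S ∩ (G.neighborSet c ∪ G.neighborSet c')).ncard ≤ 2 := by
  by_cases hcx : G.Adj c x
  · exact ncard_insert_inter_neighborSet_union_le_two_of_adj h₃ hcommon hS hcc' hc hc' hcx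
  by_cases hc'x : G.Adj c' x
  · rw [Set.union_comm]
    exact ncard_insert_inter_neighborSet_union_le_two_of_adj h₃ hcommon hS hcc'.symm hc' hc hc'x
  -- star vertices `y ∼ c` and `y' ∼ c'` would close the walk `x y c c' y' x` of length 5
  have hempty : insert x S ∩ G.neighborSet c = ∅ ∨ insert x S ∩ G.neighborSet c' = ∅ := by
    by_contra! ⟨⟨y, hy⟩, ⟨y', hy'⟩⟩
    have hxy := (insert_inter_neighborSet_subset_commonNeighbors hS hcx hy).2
    have hxy' := (insert_inter_neighborSet_subset_commonNeighbors hS hc'x hy').2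
    exact h₅ x (.cons hxy (.cons hy.2.symm (.cons hcc' (.cons hy'.2 (.cons hxy'.symm .nil))))) rfl
  rw [Set.inter_union_distrib_left]
  rcases hempty with h | h
  · rw [h, Set.empty_union]
    exact ncard_insert_inter_neighborSet_le_two h₃ hcommon hS hc'
  · rw [h, Set.union_empty]
    exact ncard_insert_inter_neighborSet_le_two h₃ hcommon hS hc

theorem ncard_insert_inter_setOf_exists_adj_le [Finite V]
    (h₃ : ∀ u (w : G.Walk u u), w.length ≠ 3) (h₅ : ∀ u (w : G.Walk u u), w.length ≠ 5)
    (hcommon : ∀ a b, a ≠ b → (G.commonNeighbors a b).ncard ≤ 2)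
    (hS : S ⊆ G.neighborSet x) {C : Finset V} (hcard : 2 ≤ #C)
    (hC : ∀ c ∈ C, c ∉ insert x S) (hconn : (G.induce (C : Set V)).Connected) :
    (insert x S ∩ {y | ∃ c ∈ C, G.Adj c y}).ncard ≤ 2 * (#C - 1) := by
  obtain ⟨c, hc, c', hc', hcc'⟩ :=
    exists_adj_of_induce_connected hconn (one_lt_card_iff_nontrivial.mp hcard)
  exact ncard_inter_setOf_exists_adj_le_of_ne hc hc' hcc'.ne
    (ncard_insert_inter_neighborSet_union_le_two h₃ h₅ hcommon hS hcc' (hC c hc) (hC c' hc'))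
    fun d hd => ncard_insert_inter_neighborSet_le_two h₃ hcommon hS (hC d hd)

end SimpleGraph

namespace FQ

variable {n : ℕ}

def gens (n : ℕ) : Set (Fin n → ZMod 2) :=
  insert 1 (Set.range fun i => Pi.single i 1)

lemma mem_gens {g : Fin n → ZMod 2} : g ∈ gens n ↔ g = 1 ∨ ∃ i, Pi.single i 1 = g :=
  Iff.rfl

lemma add_self_eq_zero {ι : Type*} (u : ι → ZMod 2) : u + u = 0 :=
  funext fun j => CharTwo.add_self_eq_zero (u j)

lemma single_one_injective : Function.Injective fun i : Fin n => (Pi.single i 1 : Fin n → ZMod 2) :=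
  fun i j h => by
    by_contra hij
    simpa [Pi.single_apply, hij] using congrFun h i

lemma sum_ne_zero_of_subset_gens {G : Finset (Fin n → ZMod 2)} (hG : ↑G ⊆ gens n)
    (hne : G.Nonempty) (hcard : #G ≤ n) : ∑ g ∈ G, g ≠ 0 := by
  suffices ∃ g₀ ∈ G, ∃ p, g₀ p = 1 ∧ ∀ g ∈ G, g ≠ g₀ → g p = 0 by
    obtain ⟨g₀, hg₀, p, hg₀p, hp⟩ := this
    intro h
    have hsum := congrFun h p
    rw [Finset.sum_apply, sum_eq_single g₀ hp (absurd hg₀), hg₀p] at hsum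
    exact one_ne_zero hsum
  by_cases h1 : (1 : Fin n → ZMod 2) ∈ G
  · obtain ⟨_, hmem, hp⟩ := exists_mem_notMem_of_card_lt_card (s := G.erase 1)
      (t := univ.image fun p => Pi.single p 1) (by
        rw [card_image_of_injective _ single_one_injective, card_univ, Fintype.card_fin,
          card_erase_of_mem h1]
        have := card_pos.mpr ⟨_, h1⟩
        omega)
    obtain ⟨p, -, rfl⟩ := mem_image.mp hmem
    refine ⟨1, h1, p, rfl, fun g hg hg1 => ?_⟩
    obtain ⟨j, rfl⟩ := (mem_gens.mp (hG hg)).resolve_left hg1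
    have hjp : p ≠ j := by
      rintro rfl
      exact hp (mem_erase.mpr ⟨hg1, hg⟩)
    simp [hjp]
  · have hunit : ∀ g ∈ G, ∃ i, Pi.single i 1 = g := fun g hg =>
      (mem_gens.mp (hG hg)).resolve_left fun h => h1 (h ▸ hg)
    obtain ⟨g₀, hg₀⟩ := hne
    obtain ⟨i, rfl⟩ := hunit _ hg₀
    refine ⟨_, hg₀, i, by simp, fun g hg hgi => ?_⟩
    obtain ⟨j, rfl⟩ := hunit g hg
    have hij : i ≠ j := by
      rintro rfl
      exact hgi rfl
    simp [hij]

lemma add_apply_eq_one_iff (u v : Fin n → ZMod 2) (j : Fin n) :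
    (u + v) j = 1 ↔ u j ≠ v j := by
  rw [Pi.add_apply]
  generalize u j = a, v j = b
  revert a b
  decide

lemma ext_of_apply_eq_one_iff {w w' : Fin n → ZMod 2} (h : ∀ j, w j = 1 ↔ w' j = 1) :
    w = w' := by
  funext j
  have hj := h j
  generalize w j = a, w' j = b at hj
  revert a b
  decide

lemma add_mem_gens_of_adj {u v : Fin n → ZMod 2} (h : (FQ n).Adj u v) : u + v ∈ gens n := by
  have hdist : hammingDist u v = 1 ∨ hammingDist u v = n := by
    simp only [FQ, SimpleGraph.fromRel_adj, hammingDist_comm v u, or_self] at h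
    exact h.2
  rcases hdist with h1 | hn
  · obtain ⟨i, hi⟩ := card_eq_one.mp h1
    refine Or.inr ⟨i, ext_of_apply_eq_one_iff fun j => ?_⟩
    have hj := congrArg (j ∈ ·) hi
    simp only [mem_filter, mem_univ, true_and, mem_singleton, eq_iff_iff] at hj
    rw [add_apply_eq_one_iff, hj]
    simp [Pi.single_apply]
  · have hall := eq_univ_of_card _ (hn.trans (Fintype.card_fin n).symm)
    refine Or.inl (ext_of_apply_eq_one_iff fun j => ?_)
    have hj := congrArg (j ∈ ·) hall
    simp only [mem_filter, mem_univ, true_and, eq_iff_iff, iff_true] at hj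
    exact (add_apply_eq_one_iff u v j).trans (iff_of_true hj rfl)

lemma exists_finset_subset_gens_of_walk {u v : Fin n → ZMod 2} (w : (FQ n).Walk u v) :
    ∃ G : Finset (Fin n → ZMod 2), ↑G ⊆ gens n ∧ #G ≤ w.length ∧ Even (#G + w.length) ∧
      u + v = ∑ g ∈ G, g := by
  induction w with
  | nil => exact ⟨∅, by simp, by simp, by simp, by simp [add_self_eq_zero]⟩
  | @cons u u' v h w ih =>
    obtain ⟨G, hG, hcard, heven, hsum⟩ := ih
    have hgen := add_mem_gens_of_adj h
    have hsplit : u + v = (u + u') + ∑ g ∈ G, g := by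
      rw [← hsum, ← add_assoc, add_assoc u, add_self_eq_zero, add_zero]
    rw [SimpleGraph.Walk.length_cons]
    by_cases hmem : u + u' ∈ G
    · have hpos := card_pos.mpr ⟨_, hmem⟩
      refine ⟨G.erase (u + u'), (coe_subset.mpr (erase_subset _ _)).trans hG, ?_, ?_, ?_⟩
      · rw [card_erase_of_mem hmem]
        omega
      · rw [card_erase_of_mem hmem, show #G - 1 + (w.length + 1) = #G + w.length by omega]
        exact heven
      · rw [hsplit, ← add_sum_erase _ _ hmem, ← add_assoc, add_self_eq_zero, zero_add]
    · refine ⟨insert (u + u') G, ?_, ?_, ?_, ?_⟩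
      · rw [coe_insert]
        exact Set.insert_subset hgen hG
      · rw [card_insert_of_notMem hmem]
        omega
      · rw [card_insert_of_notMem hmem, show #G + 1 + (w.length + 1) = #G + w.length + 2 by omega]
        exact heven.add even_two
      · rw [hsplit, sum_insert hmem]

theorem lt_length_of_odd_length {u : Fin n → ZMod 2} (w : (FQ n).Walk u u)
    (hw : Odd w.length) : n < w.length := by
  by_contra! hle
  obtain ⟨G, hG, hcard, heven, hsum⟩ := exists_finset_subset_gens_of_walk w
  have hne : G.Nonempty := by
    rw [nonempty_iff_ne_empty]
    rintro rfl
    rw [card_empty, zero_add] at heven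
    exact Nat.not_even_iff_odd.mpr hw heven
  exact sum_ne_zero_of_subset_gens hG hne (hcard.trans hle) (hsum.symm.trans (add_self_eq_zero u))

lemma add_eq_add_of_adj (hn : 4 ≤ n) {a b u v : Fin n → ZMod 2} (hab : a ≠ b) (huv : u ≠ v)
    (hau : (FQ n).Adj a u) (hub : (FQ n).Adj u b) (hav : (FQ n).Adj a v)
    (hvb : (FQ n).Adj v b) : u + v = a + b := by
  -- `NeZero n` provides the instance `CharP (Fin n → ZMod 2) 2` that `grind` works with
  have : NeZero n := ⟨by omega⟩
  by_contra h
  refine sum_ne_zero_of_subset_gens (G := {a + u, u + b, a + v, v + b}) ?_ (insert_nonempty _ _)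
    (card_le_four.trans hn) ?_
  · simp only [coe_insert, coe_singleton, Set.insert_subset_iff, Set.singleton_subset_iff]
    exact ⟨add_mem_gens_of_adj hau, add_mem_gens_of_adj hub, add_mem_gens_of_adj hav,
      add_mem_gens_of_adj hvb⟩
  · rw [sum_insert (by grind), sum_insert (by grind), sum_pair (by grind)]
    grind

theorem ncard_commonNeighbors_le_two (hn : 4 ≤ n) {a b : Fin n → ZMod 2} (hab : a ≠ b) :
    ((FQ n).commonNeighbors a b).ncard ≤ 2 := by
  by_contra! h
  obtain ⟨u, v, w, hu, hv, hw, huv, huw, hvw⟩ := (Set.two_lt_ncard_iff).mp h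
  simp only [SimpleGraph.mem_commonNeighbors] at hu hv hw
  have hv' := add_eq_add_of_adj hn hab huv hu.1 hu.2.symm hv.1 hv.2.symm
  have hw' := add_eq_add_of_adj hn hab huw hu.1 hu.2.symm hw.1 hw.2.symm
  exact hvw (add_left_cancel (hv'.trans hw'.symm))

end FQ

theorem folded_hypercube_star_connected_neighbors_general (n r : ℕ) (hn : 5 ≤ n)
    (x : Fin n → ZMod 2) (xs : Fin r → (Fin n → ZMod 2))
    (hadj : ∀ i, (FQ n).Adj x (xs i))
    (C : Finset (Fin n → ZMod 2)) (hk : 2 ≤ C.card)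
    (hdisj : ∀ c ∈ C, c ∉ insert x (Set.range xs))
    (hconn : ((FQ n).induce (C : Set (Fin n → ZMod 2))).Connected) :
    ((insert x (Set.range xs)) ∩ {y | ∃ c ∈ C, (FQ n).Adj c y}).ncard
      ≤ 2 * (C.card - 1) := by
  have hodd {u} (w : (FQ n).Walk u u) (hw : Odd w.length) : 5 < w.length :=
    hn.trans_lt (FQ.lt_length_of_odd_length w hw)
  exact SimpleGraph.ncard_insert_inter_setOf_exists_adj_le
    (fun _ w h => by have := hodd w (by rw [h]; decide); omega)
    (fun _ w h => by have := hodd w (by rw [h]; decide); omega)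
    (fun _ _ hab => FQ.ncard_commonNeighbors_le_two (by omega) hab)
    (Set.range_subset_iff.mpr hadj) hk hdisj hconn

/-- A connected subgraph C of FQ_n (n ≥ 5) disjoint from a star K_{1,r}
(2 ≤ r ≤ n + 1) with k ≥ 2 vertices has at most 2(k-1) neighbors among the
star's vertices. -/
theorem folded_hypercube_star_connected_neighbors (n r : ℕ) (hn : 5 ≤ n)
    (hr : 2 ≤ r) (hrn : r ≤ n + 1)
    (x : Fin n → ZMod 2) (xs : Fin r → (Fin n → ZMod 2))
    (hinj : Function.Injective xs) (hadj : ∀ i, (FQ n).Adj x (xs i))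
    (C : Finset (Fin n → ZMod 2)) (hk : 2 ≤ C.card)
    (hdisj : ∀ c ∈ C, c ∉ insert x (Set.range xs))
    (hconn : ((FQ n).induce (C : Set (Fin n → ZMod 2))).Connected) :
    ((insert x (Set.range xs)) ∩ {y | ∃ c ∈ C, (FQ n).Adj c y}).ncard
      ≤ 2 * (C.card - 1) :=
  folded_hypercube_star_connected_neighbors_general n r hn x xs hadj C hk hdisj hconn
end
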